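/- arXiv:1404.2954 — 8 statements merged into one kernel-verified Lean document; each statement's English description precedes it below -/
import Mathlib

section
/- The synergy value χ is the unique measure of synergy satisfying all of the following five properties. (P5, Symmetric-Synergy): for every game (N,v), every pair of symmetric players i,j in (N,v), and every coalition C ⊆ N\{i,j}, ψ^N_v(C∪{i}) = ψ^N_v(C∪{j}). (P6, Null-Synergy): for every game (N,v) and every null player i in (N,v), ψ^N_v(C) = ψ^N_v(C∪{i}) for all C ⊆ N. (P7, Dummy-Synergy): for every game (N,v), the game (N, v − ψ^N_v) is a game of dummies. (P8, Normalized-Synergy): for every game (N,v), Σ_{C⊆N} ψ^N_v(C) = 0. (P9, Additive-Synergy): for every pair of games (N,v) and (N,w) on the same player set, and every coalition C ⊆ N, ψ^N_v(C) + ψ^N_w(C) = ψ^N_{v+w}(C). That is: χ satisfies P5–P9, and any measure of synergy ψ satisfying P5–P9 equals χ on every game and every coalition. -/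
/-!
The synergy value satisfies the axioms because the Shapley value is invariant under relabelling
the players (symmetry) and is efficient (normalization); the remaining axioms are immediate.

For uniqueness, the dummy axiom says that `v - ψ^N_v` is additive on subsets of `N`, so `ψ^N_v` is
determined by its values on singletons, and normalization then fixes their sum over `N`. In a
unanimity game `c · u_T` the players of `T` are symmetric and the others are null, so the singleton
values are equal on `T` and vanish off `T`: they are determined by their sum. Null-synergy and
additivity make `ψ^N_v` depend only on `v` restricted to subsets of `N`, where `v` is a sum of
unanimity games (Möbius inversion), and additivity concludes.
-/

open Finset

/-- The marginal contribution of player `i` to coalition `C` in a game with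
characteristic function `v`: `MC^C_i(N,v) = v(C ∪ {i}) − v(C)`. -/
noncomputable def MC (v : Finset ℕ → ℝ) (C : Finset ℕ) (i : ℕ) : ℝ :=
  v (insert i C) - v C

/-- The Shapley value of player `i` in the game with player set `N` and
characteristic function `v`. -/
noncomputable def shapley (N : Finset ℕ) (v : Finset ℕ → ℝ) (i : ℕ) : ℝ :=
  ∑ C ∈ (N.erase i).powerset,
    ((C.card.factorial : ℝ) * ((N.card - C.card - 1).factorial : ℝ) /
      (N.card.factorial : ℝ)) * (v (insert i C) - v C)

/-- The average Shapley value `φ̄_i(N,v) = 2^{1−n} Σ_{C ⊆ N, i ∈ C} φ_i(C,v)`. -/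
noncomputable def avgShapley (N : Finset ℕ) (v : Finset ℕ → ℝ) (i : ℕ) : ℝ :=
  (2 / 2 ^ N.card : ℝ) * ∑ C ∈ N.powerset.filter (fun C => i ∈ C), shapley C v i

/-- The synergy value `χ^N_v(C) = v(C) − Σ_{i ∈ C} φ̄_i(N,v)`. -/
noncomputable def synergyValue (N : Finset ℕ) (v : Finset ℕ → ℝ) (C : Finset ℕ) : ℝ :=
  v C - ∑ i ∈ C, avgShapley N v i

/-- Players `i` and `j` are symmetric in the game `(N,v)`. -/
def IsSymmetric (N : Finset ℕ) (v : Finset ℕ → ℝ) (i j : ℕ) : Prop :=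
  i ∈ N ∧ j ∈ N ∧ ∀ C ⊆ N \ {i, j}, v (insert i C) = v (insert j C)

/-- Player `i` is a null player in the game `(N,v)`. -/
def IsNullPlayer (N : Finset ℕ) (v : Finset ℕ → ℝ) (i : ℕ) : Prop :=
  i ∈ N ∧ ∀ C ⊆ N, v (insert i C) = v C

/-- Player `i` is a dummy player in the game `(N,v)`. -/
def IsDummyPlayer (N : Finset ℕ) (v : Finset ℕ → ℝ) (i : ℕ) : Prop :=
  i ∈ N ∧ ∀ C ⊆ N \ {i}, v (insert i C) = v C + v {i}

/-- A game of dummies: every player is a dummy player. -/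
def GameOfDummies (N : Finset ℕ) (v : Finset ℕ → ℝ) : Prop :=
  ∀ i ∈ N, IsDummyPlayer N v i

/-- A measure of synergy assigns to every game a real value for each coalition,
with zero synergy for the empty coalition. -/
def IsSynergyMeasure (ψ : Finset ℕ → (Finset ℕ → ℝ) → Finset ℕ → ℝ) : Prop :=
  ∀ (N : Finset ℕ) (v : Finset ℕ → ℝ), v ∅ = 0 → ψ N v ∅ = 0

/-- P5 (Symmetric-Synergy). -/
def SymmetricSynergy (ψ : Finset ℕ → (Finset ℕ → ℝ) → Finset ℕ → ℝ) : Prop :=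
  ∀ (N : Finset ℕ) (v : Finset ℕ → ℝ), v ∅ = 0 → ∀ i j : ℕ, IsSymmetric N v i j →
    ∀ C ⊆ N \ {i, j}, ψ N v (insert i C) = ψ N v (insert j C)

/-- P6 (Null-Synergy). -/
def NullSynergy (ψ : Finset ℕ → (Finset ℕ → ℝ) → Finset ℕ → ℝ) : Prop :=
  ∀ (N : Finset ℕ) (v : Finset ℕ → ℝ), v ∅ = 0 → ∀ i : ℕ, IsNullPlayer N v i →
    ∀ C ⊆ N, ψ N v C = ψ N v (insert i C)

/-- P7 (Dummy-Synergy). -/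
def DummySynergy (ψ : Finset ℕ → (Finset ℕ → ℝ) → Finset ℕ → ℝ) : Prop :=
  ∀ (N : Finset ℕ) (v : Finset ℕ → ℝ), v ∅ = 0 →
    GameOfDummies N (fun C => v C - ψ N v C)

/-- P8 (Normalized-Synergy). -/
def NormalizedSynergy (ψ : Finset ℕ → (Finset ℕ → ℝ) → Finset ℕ → ℝ) : Prop :=
  ∀ (N : Finset ℕ) (v : Finset ℕ → ℝ), v ∅ = 0 → ∑ C ∈ N.powerset, ψ N v C = 0

/-- P9 (Additive-Synergy). -/
def AdditiveSynergy (ψ : Finset ℕ → (Finset ℕ → ℝ) → Finset ℕ → ℝ) : Prop :=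
  ∀ (N : Finset ℕ) (v w : Finset ℕ → ℝ), v ∅ = 0 → w ∅ = 0 →
    ∀ C ⊆ N, ψ N v C + ψ N w C = ψ N (fun S => v S + w S) C

/-- P10 (Marginal-Synergy). -/
def MarginalSynergy (ψ : Finset ℕ → (Finset ℕ → ℝ) → Finset ℕ → ℝ) : Prop :=
  ∀ (N : Finset ℕ) (v w : Finset ℕ → ℝ), v ∅ = 0 → w ∅ = 0 → ∀ C ⊆ N,
    (∀ i ∈ C, ∀ S ⊆ N \ {i}, MC v S i = MC w S i) → ψ N v C = ψ N w C

namespace Finset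

variable {α M : Type*} [DecidableEq α]

theorem filter_mem_powerset_eq_image {s : Finset α} {a : α} (ha : a ∈ s) :
    s.powerset.filter (a ∈ ·) = (s.erase a).powerset.image (insert a) := by
  ext t
  simp only [mem_filter, mem_powerset, mem_image]
  constructor
  · rintro ⟨hts, hat⟩
    exact ⟨t.erase a, erase_subset_erase a hts, insert_erase hat⟩
  · rintro ⟨u, hu, rfl⟩
    exact ⟨insert_subset ha (hu.trans (erase_subset a s)), mem_insert_self a u⟩

theorem injOn_insert_powerset_erase (s : Finset α) (a : α) :
    Set.InjOn (insert a) ((s.erase a).powerset : Set (Finset α)) := by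
  intro t ht u hu h
  have hat : a ∉ t := fun h' => notMem_erase a s (mem_powerset.1 ht h')
  have hau : a ∉ u := fun h' => notMem_erase a s (mem_powerset.1 hu h')
  rw [← erase_insert hat, ← erase_insert hau, h]

theorem card_filter_mem_powerset {s : Finset α} {a : α} (ha : a ∈ s) :
    #(s.powerset.filter (a ∈ ·)) = 2 ^ (#s - 1) := by
  rw [filter_mem_powerset_eq_image ha, card_image_of_injOn (injOn_insert_powerset_erase s a),
    card_powerset, card_erase_of_mem ha]

theorem sum_sum_powerset_comm [AddCommMonoid M] (s : Finset α) (f : α → Finset α → M) :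
    ∑ t ∈ s.powerset, ∑ a ∈ t, f a t = ∑ a ∈ s, ∑ t ∈ s.powerset.filter (a ∈ ·), f a t :=
  sum_comm' fun t a => by
    simp only [mem_powerset, mem_filter]
    exact ⟨fun ⟨hts, hat⟩ => ⟨⟨hts, hat⟩, hts hat⟩, fun ⟨⟨hts, hat⟩, _⟩ => ⟨hts, hat⟩⟩

theorem sum_powerset_sum [AddCommMonoid M] (s : Finset α) (f : α → M) :
    ∑ t ∈ s.powerset, ∑ a ∈ t, f a = 2 ^ (#s - 1) • ∑ a ∈ s, f a := by
  rw [sum_sum_powerset_comm, smul_sum]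
  exact sum_congr rfl fun a ha => by rw [sum_const, card_filter_mem_powerset ha]

theorem sum_sum_powerset_erase [AddCommMonoid M] (s : Finset α) (f : α → Finset α → M) :
    ∑ a ∈ s, ∑ t ∈ (s.erase a).powerset, f a t = ∑ t ∈ s.powerset, ∑ a ∈ t, f a (t.erase a) := by
  rw [sum_sum_powerset_comm]
  refine sum_congr rfl fun a ha => ?_
  rw [filter_mem_powerset_eq_image ha, sum_image (injOn_insert_powerset_erase s a)]
  refine sum_congr rfl fun t ht => ?_
  rw [erase_insert fun h => notMem_erase a s (mem_powerset.1 ht h)]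

theorem sum_sum_powerset_erase_const [AddCommMonoid M] (s : Finset α) (f : Finset α → M) :
    ∑ a ∈ s, ∑ t ∈ (s.erase a).powerset, f t = ∑ t ∈ s.powerset, (#s - #t) • f t := by
  rw [sum_comm' (t' := s.powerset) (s' := (s \ ·)) fun a t => by
    simp only [mem_powerset, mem_sdiff, subset_erase]; tauto]
  exact sum_congr rfl fun t ht => by rw [sum_const, card_sdiff_of_subset (mem_powerset.1 ht)]

theorem exists_sum_powerset_eq [AddCommGroup M] (s : Finset α) (f : Finset α → M) :
    ∃ c : Finset α → M, ∀ t ⊆ s, ∑ u ∈ t.powerset, c u = f t := by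
  induction s using Finset.induction_on generalizing f with
  | empty => exact ⟨f, fun t ht => by simp [subset_empty.1 ht]⟩
  | @insert a s has ih =>
    obtain ⟨c₁, hc₁⟩ := ih f
    obtain ⟨c₂, hc₂⟩ := ih fun u => f (insert a u)
    let c : Finset α → M := fun u => if a ∈ u then c₂ (u.erase a) - c₁ (u.erase a) else c₁ u
    have hc : ∀ u ⊆ s, ∑ w ∈ u.powerset, c w = f u := fun u hu => by
      rw [← hc₁ u hu]
      exact sum_congr rfl fun w hw => if_neg fun h => has (hu (mem_powerset.1 hw h))
    have hc_insert : ∀ u ⊆ s, ∑ w ∈ u.powerset, c (insert a w) = f (insert a u) - f u :=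
      fun u hu => by
        rw [← hc₁ u hu, ← hc₂ u hu, ← sum_sub_distrib]
        refine sum_congr rfl fun w hw => ?_
        have haw : a ∉ w := fun h => has (hu (mem_powerset.1 hw h))
        simp only [c, mem_insert_self, if_true, erase_insert haw]
    refine ⟨c, fun t ht => ?_⟩
    by_cases hat : a ∈ t
    · have hts : t.erase a ⊆ s := fun x hx =>
        (mem_insert.1 (ht (mem_of_mem_erase hx))).resolve_left (ne_of_mem_erase hx)
      rw [← insert_erase hat, sum_powerset_insert (notMem_erase a t), hc _ hts, hc_insert _ hts,
        add_sub_cancel]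
    · exact hc t fun x hx => (mem_insert.1 (ht hx)).resolve_left (ne_of_mem_of_not_mem hx hat)

theorem image_swap_eq_self {T : Finset α} {i j : α} (h : i ∈ T ↔ j ∈ T) :
    T.image (Equiv.swap i j) = T := by
  ext x
  simp only [mem_image, Equiv.swap_apply_def]
  grind

theorem image_swap_of_mem_of_notMem {T : Finset α} {i j : α} (hi : i ∈ T) (hj : j ∉ T) :
    T.image (Equiv.swap i j) = insert j (T.erase i) := by
  ext x
  simp only [mem_image, mem_insert, mem_erase, Equiv.swap_apply_def]
  grind

theorem erase_subset_sdiff_pair {T N : Finset α} {a b : α} (hT : T ⊆ N) (hb : b ∉ T) :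
    T.erase a ⊆ N \ {a, b} := fun x hx => by
  simp only [mem_erase] at hx
  simp only [mem_sdiff, mem_insert, mem_singleton]
  exact ⟨hT hx.2, not_or.2 ⟨hx.1, ne_of_mem_of_not_mem hx.2 hb⟩⟩

theorem notMem_of_subset_sdiff_pair {C N : Finset α} {a b : α} (hC : C ⊆ N \ {a, b}) :
    a ∉ C ∧ b ∉ C :=
  ⟨fun ha => (mem_sdiff.1 (hC ha)).2 (mem_insert_self a {b}),
    fun hb => (mem_sdiff.1 (hC hb)).2 (mem_insert_of_mem (mem_singleton_self b))⟩

end Finset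

open Nat in
noncomputable def shapleyWeight (n s : ℕ) : ℝ := s ! * (n - s - 1)! / n !

theorem shapley_eq_sum_shapleyWeight (N : Finset ℕ) (v : Finset ℕ → ℝ) (i : ℕ) :
    shapley N v i =
      ∑ S ∈ (N.erase i).powerset, shapleyWeight #N #S * (v (insert i S) - v S) := rfl

open Nat in
/-- The coefficient of `v T` in `∑ i ∈ C, shapley C v i`, where `t = #T` and `n = #C`. -/
theorem natCast_mul_shapleyWeight_sub {n t : ℕ} (ht : t ≤ n) :
    t * shapleyWeight n (t - 1) - (n - t : ℕ) * shapleyWeight n t =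
      (if t = n then 1 else 0) - (if t = 0 then 1 else 0) := by
  have hn : (n ! : ℝ) ≠ 0 := by positivity
  have hpred : t ≠ 0 → t * shapleyWeight n (t - 1) = t ! * (n - t)! / n ! := fun h0 => by
    rw [shapleyWeight, show n - (t - 1) - 1 = n - t by omega, ← mul_div_assoc, ← mul_assoc,
      ← Nat.cast_mul, Nat.mul_factorial_pred h0]
  have hsucc : t ≠ n → (n - t : ℕ) * shapleyWeight n t = t ! * (n - t)! / n ! := fun hn' => by
    rw [shapleyWeight, ← mul_div_assoc, mul_left_comm, ← Nat.cast_mul,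
      Nat.mul_factorial_pred (by omega : n - t ≠ 0)]
  by_cases h0 : t = 0 <;> by_cases hn' : t = n
  · subst h0; subst hn'; simp
  · subst h0; rw [hsucc hn', if_neg hn']; simp [hn]
  · subst hn'; rw [hpred h0]; simp [hn, h0]
  · rw [hpred h0, hsucc hn', if_neg hn', if_neg h0, sub_self, sub_self]

theorem sum_shapley (C : Finset ℕ) (v : Finset ℕ → ℝ) :
    ∑ i ∈ C, shapley C v i = v C - v ∅ := by
  simp only [shapley_eq_sum_shapleyWeight, mul_sub, sum_sub_distrib]
  rw [sum_sum_powerset_erase (f := fun i S => shapleyWeight #C #S * v (insert i S)),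
    sum_sum_powerset_erase_const (f := fun S => shapleyWeight #C #S * v S), ← sum_sub_distrib]
  have hcoeff : ∀ T ∈ C.powerset,
      ∑ i ∈ T, shapleyWeight #C #(T.erase i) * v (insert i (T.erase i))
        - (#C - #T) • (shapleyWeight #C #T * v T)
        = ((if T = C then 1 else 0) - (if T = ∅ then 1 else 0)) * v T := fun T hT => by
    have hTC := mem_powerset.1 hT
    have hcard : T = C ↔ #T = #C :=
      ⟨congrArg card, fun h => eq_of_subset_of_card_le hTC h.ge⟩
    simp only [hcard, ← card_eq_zero (s := T)]
    rw [← natCast_mul_shapleyWeight_sub (card_le_card hTC), sum_congr rfl fun i hi => by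
      rw [card_erase_of_mem hi, insert_erase hi], sum_const, nsmul_eq_mul, nsmul_eq_mul]
    ring
  rw [sum_congr rfl hcoeff]
  simp [sub_mul, sum_sub_distrib, ite_mul]

theorem shapley_image {f : ℕ → ℕ} (hf : Function.Injective f) (S : Finset ℕ)
    (v : Finset ℕ → ℝ) (i : ℕ) :
    shapley (S.image f) v (f i) = shapley S (fun T => v (T.image f)) i := by
  simp only [shapley_eq_sum_shapleyWeight]
  rw [← image_erase hf, powerset_image, sum_image (image_injective hf).injOn]
  simp only [card_image_of_injective _ hf, image_insert]

theorem shapley_congr {S : Finset ℕ} {v w : Finset ℕ → ℝ} {i : ℕ} (hi : i ∈ S)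
    (h : ∀ T ⊆ S, v T = w T) : shapley S v i = shapley S w i := by
  refine sum_congr rfl fun T hT => ?_
  have hTS : T ⊆ S := (mem_powerset.1 hT).trans (erase_subset i S)
  rw [h T hTS, h _ (insert_subset hi hTS)]

theorem IsSymmetric.apply_image_swap {N : Finset ℕ} {v : Finset ℕ → ℝ} {i j : ℕ}
    (h : IsSymmetric N v i j) {T : Finset ℕ} (hT : T ⊆ N) :
    v (T.image (Equiv.swap i j)) = v T := by
  obtain ⟨-, -, hsym⟩ := h
  by_cases hiT : i ∈ T <;> by_cases hjT : j ∈ T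
  · rw [image_swap_eq_self (iff_of_true hiT hjT)]
  · rw [image_swap_of_mem_of_notMem hiT hjT, ← hsym _ (erase_subset_sdiff_pair hT hjT),
      insert_erase hiT]
  · rw [Equiv.swap_comm, image_swap_of_mem_of_notMem hjT hiT,
      hsym _ (pair_comm i j ▸ erase_subset_sdiff_pair hT hiT),
      insert_erase hjT]
  · rw [image_swap_eq_self (iff_of_false hiT hjT)]

theorem avgShapley_eq_of_isSymmetric {N : Finset ℕ} {v : Finset ℕ → ℝ} {i j : ℕ}
    (h : IsSymmetric N v i j) : avgShapley N v i = avgShapley N v j := by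
  set σ := Equiv.swap i j
  have hσN : ∀ S ⊆ N, S.image σ ⊆ N := fun S hS => by
    simpa only [σ, image_swap_eq_self (iff_of_true h.1 h.2.1)] using
      image_subset_image (f := σ) hS
  have hσσ : ∀ S : Finset ℕ, (S.image σ).image σ = S := fun S => by
    simp [image_image, Function.comp_def, σ]
  unfold avgShapley
  congr 1
  refine sum_nbij' (·.image σ) (·.image σ) (fun S hS => ?_) (fun S hS => ?_) (fun S _ => hσσ S)
    (fun S _ => hσσ S) (fun S hS => ?_) <;> rw [mem_filter, mem_powerset] at hS
  · exact mem_filter.2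
      ⟨mem_powerset.2 (hσN S hS.1), mem_image.2 ⟨i, hS.2, Equiv.swap_apply_left i j⟩⟩
  · exact mem_filter.2
      ⟨mem_powerset.2 (hσN S hS.1), mem_image.2 ⟨j, hS.2, Equiv.swap_apply_right i j⟩⟩
  · calc shapley S v i = shapley S (fun T => v (T.image σ)) i :=
          shapley_congr hS.2 fun T hT => (h.apply_image_swap (hT.trans hS.1)).symm
      _ = shapley (S.image σ) v (σ i) := (shapley_image σ.injective S v i).symm
      _ = shapley (S.image σ) v j := by rw [Equiv.swap_apply_left]

theorem avgShapley_eq_zero_of_isNullPlayer {N : Finset ℕ} {v : Finset ℕ → ℝ} {i : ℕ}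
    (h : IsNullPlayer N v i) : avgShapley N v i = 0 := by
  refine mul_eq_zero_of_right _ (sum_eq_zero fun S hS => sum_eq_zero fun T hT => ?_)
  have hTN : T ⊆ N := ((mem_powerset.1 hT).trans (erase_subset i S)).trans
    (mem_powerset.1 (mem_filter.1 hS).1)
  rw [h.2 T hTN, sub_self, mul_zero]

theorem avgShapley_add (N : Finset ℕ) (v w : Finset ℕ → ℝ) (i : ℕ) :
    avgShapley N (fun S => v S + w S) i = avgShapley N v i + avgShapley N w i := by
  simp only [avgShapley, shapley, ← mul_add, ← sum_add_distrib, add_sub_add_comm]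

theorem pow_mul_sum_avgShapley (N : Finset ℕ) {v : Finset ℕ → ℝ} (hv : v ∅ = 0) :
    (2 : ℝ) ^ (#N - 1) * ∑ i ∈ N, avgShapley N v i = ∑ C ∈ N.powerset, v C := by
  rcases N.eq_empty_or_nonempty with rfl | hN
  · simp [hv]
  have hpow : (2 : ℝ) ^ (#N - 1) * (2 / 2 ^ #N) = 1 := by
    rw [← Nat.sub_add_cancel (card_pos.2 hN), pow_succ, Nat.add_sub_cancel]
    field_simp
  simp only [avgShapley, mul_sum, ← mul_assoc, hpow, one_mul]
  rw [← sum_sum_powerset_comm]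
  simp [sum_shapley, hv]

theorem isSynergyMeasure_synergyValue : IsSynergyMeasure synergyValue := fun N v hv => by
  simp [synergyValue, hv]

theorem symmetricSynergy_synergyValue : SymmetricSynergy synergyValue := by
  intro N v _ i j h C hC
  obtain ⟨hiC, hjC⟩ := notMem_of_subset_sdiff_pair hC
  simp only [synergyValue, sum_insert hiC, sum_insert hjC, h.2.2 C hC,
    avgShapley_eq_of_isSymmetric h]

theorem nullSynergy_synergyValue : NullSynergy synergyValue := by
  intro N v _ i h C hC
  by_cases hiC : i ∈ C
  · rw [insert_eq_of_mem hiC]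
  · simp only [synergyValue, sum_insert hiC, h.2 C hC, avgShapley_eq_zero_of_isNullPlayer h,
      zero_add]

theorem dummySynergy_synergyValue : DummySynergy synergyValue := by
  intro N v _ i hi
  refine ⟨hi, fun C hC => ?_⟩
  have hiC : i ∉ C := fun h => (mem_sdiff.1 (hC h)).2 (mem_singleton_self i)
  simp only [synergyValue, sum_insert hiC, sum_singleton]
  ring

theorem normalizedSynergy_synergyValue : NormalizedSynergy synergyValue := by
  intro N v hv
  simp only [synergyValue, sum_sub_distrib, sum_powerset_sum, nsmul_eq_mul, Nat.cast_pow,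
    Nat.cast_ofNat, pow_mul_sum_avgShapley N hv, sub_self]

theorem additiveSynergy_synergyValue : AdditiveSynergy synergyValue := by
  intro N v w _ _ C _
  simp only [synergyValue, avgShapley_add, sum_add_distrib]
  ring

structure SatisfiesSynergyAxioms (ψ : Finset ℕ → (Finset ℕ → ℝ) → Finset ℕ → ℝ) : Prop where
  measure : IsSynergyMeasure ψ
  symmetric : SymmetricSynergy ψ
  null : NullSynergy ψ
  dummy : DummySynergy ψ
  normalized : NormalizedSynergy ψ
  additive : AdditiveSynergy ψ

theorem satisfiesSynergyAxioms_synergyValue : SatisfiesSynergyAxioms synergyValue :=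
  ⟨isSynergyMeasure_synergyValue, symmetricSynergy_synergyValue, nullSynergy_synergyValue,
    dummySynergy_synergyValue, normalizedSynergy_synergyValue, additiveSynergy_synergyValue⟩

theorem GameOfDummies.apply_eq_sum_singleton {N : Finset ℕ} {w : Finset ℕ → ℝ}
    (h : GameOfDummies N w) (h0 : w ∅ = 0) : ∀ C ⊆ N, w C = ∑ i ∈ C, w {i} := by
  intro C
  induction C using Finset.induction_on with
  | empty => exact fun _ => h0
  | @insert a C haC ih =>
    intro hC
    have hCN : C ⊆ N := (subset_insert a C).trans hC
    rw [(h a (hC (mem_insert_self a C))).2 C (subset_sdiff.2 ⟨hCN, disjoint_singleton_right.2 haC⟩),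
      sum_insert haC, ih hCN, add_comm]

section Uniqueness

variable {ψ ψ' : Finset ℕ → (Finset ℕ → ℝ) → Finset ℕ → ℝ} {N : Finset ℕ} {v : Finset ℕ → ℝ}

theorem DummySynergy.sub_apply_eq_sum_sub_singleton (hM : IsSynergyMeasure ψ)
    (hM' : IsSynergyMeasure ψ') (h7 : DummySynergy ψ) (h7' : DummySynergy ψ') (hv : v ∅ = 0)
    {C : Finset ℕ} (hC : C ⊆ N) :
    ψ N v C - ψ' N v C = ∑ i ∈ C, (ψ N v {i} - ψ' N v {i}) := by
  have h := (h7 N v hv).apply_eq_sum_singleton (by simp [hv, hM N v hv]) C hC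
  have h' := (h7' N v hv).apply_eq_sum_singleton (by simp [hv, hM' N v hv]) C hC
  simp only [sum_sub_distrib] at h h' ⊢
  linarith

theorem NormalizedSynergy.sum_singleton_eq (hM : IsSynergyMeasure ψ)
    (hM' : IsSynergyMeasure ψ') (h7 : DummySynergy ψ) (h7' : DummySynergy ψ')
    (h8 : NormalizedSynergy ψ) (h8' : NormalizedSynergy ψ') (hv : v ∅ = 0) :
    ∑ i ∈ N, ψ N v {i} = ∑ i ∈ N, ψ' N v {i} := by
  have h : ∑ C ∈ N.powerset, (ψ N v C - ψ' N v C) = 0 := by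
    rw [sum_sub_distrib, h8 N v hv, h8' N v hv, sub_zero]
  rw [sum_congr rfl fun C hC => h7.sub_apply_eq_sum_sub_singleton hM hM' h7' hv
    (mem_powerset.1 hC), sum_powerset_sum, smul_eq_zero, sum_sub_distrib, sub_eq_zero] at h
  exact h.resolve_left (pow_ne_zero _ two_ne_zero)

theorem NullSynergy.apply_eq_zero (hM : IsSynergyMeasure ψ) (h6 : NullSynergy ψ)
    {w : Finset ℕ → ℝ} (hw : ∀ S ⊆ N, w S = 0) : ∀ C ⊆ N, ψ N w C = 0 := by
  have hw0 : w ∅ = 0 := hw ∅ (empty_subset N)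
  intro C
  induction C using Finset.induction_on with
  | empty => exact fun _ => hM N w hw0
  | @insert a C _ ih =>
    intro hC
    have hCN : C ⊆ N := (subset_insert a C).trans hC
    have hnull : IsNullPlayer N w a :=
      ⟨hC (mem_insert_self a C), fun S hS => by
        rw [hw _ (insert_subset (hC (mem_insert_self a C)) hS), hw S hS]⟩
    rw [← h6 N w hw0 a hnull C hCN, ih hCN]

theorem NullSynergy.apply_singleton_eq_zero (hM : IsSynergyMeasure ψ) (h6 : NullSynergy ψ)
    (hv : v ∅ = 0) {i : ℕ} (h : IsNullPlayer N v i) : ψ N v {i} = 0 := by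
  rw [← insert_empty, ← h6 N v hv i h ∅ (empty_subset N), hM N v hv]

theorem SymmetricSynergy.apply_singleton_eq (h5 : SymmetricSynergy ψ) (hv : v ∅ = 0)
    {i j : ℕ} (h : IsSymmetric N v i j) : ψ N v {i} = ψ N v {j} := by
  simpa using h5 N v hv i j h ∅ (empty_subset _)

theorem AdditiveSynergy.apply_sum (h9 : AdditiveSynergy ψ) (A : Finset (Finset ℕ))
    (g : Finset ℕ → Finset ℕ → ℝ) (hg : ∀ T ∈ A, g T ∅ = 0) {C : Finset ℕ} (hC : C ⊆ N) :
    ψ N (fun S => ∑ T ∈ A, g T S) C = ∑ T ∈ A, ψ N (g T) C := by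
  induction A using Finset.induction_on with
  | empty =>
    have h := h9 N (fun _ => 0) (fun _ => 0) rfl rfl C hC
    simp only [add_zero, add_eq_right] at h
    simpa only [sum_empty] using h
  | @insert a A haA ih =>
    have hg' : ∀ T ∈ A, g T ∅ = 0 := fun T hT => hg T (mem_insert_of_mem hT)
    simp only [sum_insert haA]
    rw [← h9 N (g a) _ (hg a (mem_insert_self a A)) (sum_eq_zero hg') C hC, ih hg']

theorem AdditiveSynergy.apply_congr (hM : IsSynergyMeasure ψ) (h6 : NullSynergy ψ)
    (h9 : AdditiveSynergy ψ) {w : Finset ℕ → ℝ} (hv : v ∅ = 0) (hw : w ∅ = 0)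
    (hvw : ∀ S ⊆ N, v S = w S) {C : Finset ℕ} (hC : C ⊆ N) : ψ N v C = ψ N w C := by
  have hzero := h6.apply_eq_zero hM (w := fun S => v S - w S)
    (fun S hS => sub_eq_zero.2 (hvw S hS)) C hC
  have h := h9 N w (fun S => v S - w S) hw (by rw [hv, hw, sub_zero]) C hC
  simp only [add_sub_cancel, hzero, add_zero] at h
  exact h.symm

end Uniqueness

noncomputable def unanimityGame (T : Finset ℕ) (c : ℝ) : Finset ℕ → ℝ :=
  fun S => if T ⊆ S then c else 0

theorem unanimityGame_isSymmetric {N T : Finset ℕ} (hT : T ⊆ N) (c : ℝ) {i j : ℕ} (hi : i ∈ T)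
    (hj : j ∈ T) : IsSymmetric N (unanimityGame T c) i j := by
  refine ⟨hT hi, hT hj, fun C hC => ?_⟩
  rcases eq_or_ne i j with rfl | hij
  · rfl
  have hnot : ∀ {a b : ℕ}, a ≠ b → b ∈ T → b ∉ C → ¬T ⊆ insert a C := fun hab hb hbC hTC =>
    (mem_insert.1 (hTC hb)).elim (fun h => hab h.symm) hbC
  obtain ⟨hiC, hjC⟩ := notMem_of_subset_sdiff_pair hC
  simp only [unanimityGame, if_neg (hnot hij hj hjC), if_neg (hnot hij.symm hi hiC)]

theorem unanimityGame_isNullPlayer {N T : Finset ℕ} (c : ℝ) {i : ℕ} (hi : i ∈ N) (hiT : i ∉ T) :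
    IsNullPlayer N (unanimityGame T c) i :=
  ⟨hi, fun _ _ => if_congr (subset_insert_iff_of_notMem hiT) rfl rfl⟩

theorem exists_unanimityGame_decomposition (N : Finset ℕ) {v : Finset ℕ → ℝ} (hv : v ∅ = 0) :
    ∃ c : Finset ℕ → ℝ, (∀ T, unanimityGame T (c T) ∅ = 0) ∧
      ∀ S ⊆ N, v S = ∑ T ∈ N.powerset, unanimityGame T (c T) S := by
  obtain ⟨c, hc⟩ := exists_sum_powerset_eq N v
  have hc0 : c ∅ = 0 := by simpa [hv] using hc ∅ (empty_subset N)
  refine ⟨c, fun T => ?_, fun S hS => ?_⟩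
  · by_cases hT : T = ∅
    · rw [hT, unanimityGame, if_pos (empty_subset ∅), hc0]
    · exact if_neg fun h => hT (subset_empty.1 h)
  · unfold unanimityGame
    rw [← hc S hS, ← sum_subset (powerset_mono.2 hS) fun T _ hT => if_neg (mt mem_powerset.2 hT)]
    exact sum_congr rfl fun T hT => (if_pos (mem_powerset.1 hT)).symm

namespace SatisfiesSynergyAxioms

variable {ψ ψ' : Finset ℕ → (Finset ℕ → ℝ) → Finset ℕ → ℝ} {N : Finset ℕ}

theorem sum_singleton_unanimityGame (hψ : SatisfiesSynergyAxioms ψ) {T : Finset ℕ} (hT : T ⊆ N)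
    {c : ℝ} (h0 : unanimityGame T c ∅ = 0) {t : ℕ} (ht : t ∈ T) :
    ∑ i ∈ N, ψ N (unanimityGame T c) {i} = #T * ψ N (unanimityGame T c) {t} := by
  rw [← sum_subset hT fun i hi hiT => hψ.null.apply_singleton_eq_zero hψ.measure h0
      (unanimityGame_isNullPlayer c hi hiT),
    sum_congr rfl fun i hi => hψ.symmetric.apply_singleton_eq h0
      (unanimityGame_isSymmetric hT c hi ht), sum_const, nsmul_eq_mul]

theorem apply_singleton_unanimityGame_eq (hψ : SatisfiesSynergyAxioms ψ)
    (hψ' : SatisfiesSynergyAxioms ψ') {T : Finset ℕ} (hT : T ⊆ N) {c : ℝ}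
    (h0 : unanimityGame T c ∅ = 0) {j : ℕ} (hj : j ∈ N) :
    ψ N (unanimityGame T c) {j} = ψ' N (unanimityGame T c) {j} := by
  by_cases hjT : j ∈ T
  · have h := hψ.normalized.sum_singleton_eq hψ.measure hψ'.measure hψ.dummy hψ'.dummy
      hψ'.normalized h0 (N := N)
    rw [hψ.sum_singleton_unanimityGame hT h0 hjT, hψ'.sum_singleton_unanimityGame hT h0 hjT] at h
    exact mul_left_cancel₀ (Nat.cast_ne_zero.2 (card_ne_zero_of_mem hjT)) h
  · rw [hψ.null.apply_singleton_eq_zero hψ.measure h0 (unanimityGame_isNullPlayer c hj hjT),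
      hψ'.null.apply_singleton_eq_zero hψ'.measure h0 (unanimityGame_isNullPlayer c hj hjT)]

theorem apply_eq (hψ : SatisfiesSynergyAxioms ψ) (hψ' : SatisfiesSynergyAxioms ψ')
    {v : Finset ℕ → ℝ} (hv : v ∅ = 0) {C : Finset ℕ} (hC : C ⊆ N) : ψ N v C = ψ' N v C := by
  obtain ⟨c, hc0, hdecomp⟩ := exists_unanimityGame_decomposition N hv
  have hu0 : ∑ T ∈ N.powerset, unanimityGame T (c T) ∅ = 0 := sum_eq_zero fun T _ => hc0 T
  have hsingleton : ∀ i ∈ N, ψ N v {i} = ψ' N v {i} := fun i hi => by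
    have hiN : {i} ⊆ N := singleton_subset_iff.2 hi
    rw [hψ.additive.apply_congr hψ.measure hψ.null hv hu0 hdecomp hiN,
      hψ'.additive.apply_congr hψ'.measure hψ'.null hv hu0 hdecomp hiN,
      hψ.additive.apply_sum _ _ (fun T _ => hc0 T) hiN,
      hψ'.additive.apply_sum _ _ (fun T _ => hc0 T) hiN]
    exact sum_congr rfl fun T hT =>
      hψ.apply_singleton_unanimityGame_eq hψ' (mem_powerset.1 hT) (hc0 T) hi
  rw [← sub_eq_zero, hψ.dummy.sub_apply_eq_sum_sub_singleton hψ.measure hψ'.measure hψ'.dummy hv hC]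
  exact sum_eq_zero fun i hi => sub_eq_zero.2 (hsingleton i (hC hi))

end SatisfiesSynergyAxioms

/-- the synergy value `χ` is the unique measure of synergy
satisfying P5 (Symmetric-Synergy), P6 (Null-Synergy), P7 (Dummy-Synergy),
P8 (Normalized-Synergy) and P9 (Additive-Synergy). -/
theorem synergyValue_unique_P5_to_P9 :
    (IsSynergyMeasure synergyValue ∧ SymmetricSynergy synergyValue ∧
      NullSynergy synergyValue ∧ DummySynergy synergyValue ∧
      NormalizedSynergy synergyValue ∧ AdditiveSynergy synergyValue) ∧
    ∀ ψ : Finset ℕ → (Finset ℕ → ℝ) → Finset ℕ → ℝ,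
      IsSynergyMeasure ψ → SymmetricSynergy ψ → NullSynergy ψ → DummySynergy ψ →
      NormalizedSynergy ψ → AdditiveSynergy ψ →
      ∀ (N : Finset ℕ) (v : Finset ℕ → ℝ), v ∅ = 0 →
        ∀ C ⊆ N, ψ N v C = synergyValue N v C := by
  have hχ := satisfiesSynergyAxioms_synergyValue
  refine ⟨⟨hχ.measure, hχ.symmetric, hχ.null, hχ.dummy, hχ.normalized, hχ.additive⟩, ?_⟩
  intro ψ hM h5 h6 h7 h8 h9 N v hv C hC
  have hψ : SatisfiesSynergyAxioms ψ := ⟨hM, h5, h6, h7, h8, h9⟩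
  exact hψ.apply_eq hχ hv hC
end

section
/- The synergy value χ satisfies Symmetric-Synergy: for every game (N,v), every pair of symmetric players i and j in (N,v), and every coalition C ⊆ N\{i,j}, we have χ^N_v(C∪{i}) = χ^N_v(C∪{j}). -/
open Finset

section Aux

variable {N : Finset ℕ} {v : Finset ℕ → ℝ} {i j : ℕ}

lemma swap_maps_to (hiN : i ∈ N) (hjN : j ∈ N) {S : Finset ℕ} (hS : S ⊆ N) :
    S.image (Equiv.swap i j) ⊆ N := by
  intro x hx
  rcases Finset.mem_image.1 hx with ⟨y, hy, rfl⟩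
  rcases eq_or_ne y i with rfl | hyi
  · simpa [Equiv.swap_apply_left] using hjN
  rcases eq_or_ne y j with rfl | hyj
  · simpa [Equiv.swap_apply_right] using hiN
  · rw [Equiv.swap_apply_of_ne_of_ne hyi hyj]; exact hS hy

lemma image_swap_of_notMem {S : Finset ℕ} (hi : i ∉ S) (hj : j ∉ S) :
    S.image (Equiv.swap i j) = S := by
  rw [Finset.image_congr (g := id), Finset.image_id]
  intro x hx
  exact Equiv.swap_apply_of_ne_of_ne (fun h => hi (h ▸ hx)) (fun h => hj (h ▸ hx))

lemma image_swap_of_mem_mem {S : Finset ℕ} (hi : i ∈ S) (hj : j ∈ S) :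
    S.image (Equiv.swap i j) = S := by
  apply Finset.Subset.antisymm
  · intro x hx
    rcases Finset.mem_image.1 hx with ⟨y, hy, rfl⟩
    rcases eq_or_ne y i with rfl | hyi
    · simpa [Equiv.swap_apply_left] using hj
    rcases eq_or_ne y j with rfl | hyj
    · simpa [Equiv.swap_apply_right] using hi
    · rwa [Equiv.swap_apply_of_ne_of_ne hyi hyj]
  · intro x hx
    rcases eq_or_ne x i with rfl | hxi
    · exact Finset.mem_image.2 ⟨_, hj, Equiv.swap_apply_right _ _⟩
    rcases eq_or_ne x j with rfl | hxj
    · exact Finset.mem_image.2 ⟨_, hi, Equiv.swap_apply_left _ _⟩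
    · exact Finset.mem_image.2 ⟨x, hx, Equiv.swap_apply_of_ne_of_ne hxi hxj⟩

lemma image_swap_of_mem_notMem {S : Finset ℕ} (hi : i ∈ S) (hj : j ∉ S) :
    S.image (Equiv.swap i j) = insert j (S.erase i) := by
  conv_lhs => rw [← Finset.insert_erase hi]
  rw [Finset.image_insert, Equiv.swap_apply_left,
    image_swap_of_notMem (Finset.notMem_erase i S)
      (fun h => hj (Finset.mem_of_mem_erase h))]

lemma v_image_swap (hij : IsSymmetric N v i j) {S : Finset ℕ} (hS : S ⊆ N) :
    v (S.image (Equiv.swap i j)) = v S := by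
  obtain ⟨hiN, hjN, hsym⟩ := hij
  have herase : ∀ {T : Finset ℕ}, T ⊆ N → j ∉ T → T.erase i ⊆ N \ {i, j} := by
    intro T hT hjT x hx
    simp only [Finset.mem_sdiff, Finset.mem_insert, Finset.mem_singleton]
    exact ⟨hT (Finset.mem_of_mem_erase hx), by
      rintro (rfl | rfl)
      · exact Finset.notMem_erase x T hx
      · exact hjT (Finset.mem_of_mem_erase hx)⟩
  by_cases hi : i ∈ S <;> by_cases hj : j ∈ S
  · rw [image_swap_of_mem_mem hi hj]
  · rw [image_swap_of_mem_notMem hi hj, ← hsym _ (herase hS hj),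
      Finset.insert_erase hi]
  · rw [Equiv.swap_comm, image_swap_of_mem_notMem hj hi]
    have hsub : S.erase j ⊆ N \ {i, j} := by
      intro x hx
      simp only [Finset.mem_sdiff, Finset.mem_insert, Finset.mem_singleton]
      refine ⟨hS (Finset.mem_of_mem_erase hx), ?_⟩
      rintro (rfl | rfl)
      · exact hi (Finset.mem_of_mem_erase hx)
      · exact Finset.notMem_erase x S hx
    rw [hsym _ hsub, Finset.insert_erase hj]
  · rw [image_swap_of_notMem hi hj]

lemma image_swap_swap (S : Finset ℕ) :
    (S.image (Equiv.swap i j)).image (Equiv.swap i j) = S := by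
  rw [Finset.image_image]
  have h : (⇑(Equiv.swap i j) ∘ ⇑(Equiv.swap i j)) = id := by
    funext x; simp [Equiv.swap_apply_self]
  rw [h, Finset.image_id]

lemma shapley_image_swap (hij : IsSymmetric N v i j) {S : Finset ℕ}
    (hS : S ⊆ N) (hiS : i ∈ S) :
    shapley (S.image (Equiv.swap i j)) v j = shapley S v i := by
  have hinj : Function.Injective (Equiv.swap i j : ℕ → ℕ) := (Equiv.swap i j).injective
  unfold shapley
  have hcard : (S.image (Equiv.swap i j)).card = S.card :=
    Finset.card_image_of_injective _ hinj
  have herase : (S.image (Equiv.swap i j)).erase j = (S.erase i).image (Equiv.swap i j) := by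
    rw [Finset.image_erase hinj, Equiv.swap_apply_left]
  rw [herase]
  refine (Finset.sum_nbij' (fun D => D.image (Equiv.swap i j))
    (fun D => D.image (Equiv.swap i j)) ?_ ?_ ?_ ?_ ?_).symm
  · intro D hD
    rw [Finset.mem_powerset] at hD ⊢
    exact Finset.image_subset_image hD
  · intro D hD
    rw [Finset.mem_powerset] at hD ⊢
    have := Finset.image_subset_image (f := (Equiv.swap i j : ℕ → ℕ)) hD
    rwa [image_swap_swap] at this
  · intro D _; exact image_swap_swap D
  · intro D _; exact image_swap_swap D
  · intro D hD
    rw [Finset.mem_powerset] at hD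
    have hDN : D ⊆ N := fun x hx => hS (Finset.mem_of_mem_erase (hD hx))
    have hDcard : (D.image (Equiv.swap i j)).card = D.card :=
      Finset.card_image_of_injective _ hinj
    have h1 : v ((D.image (Equiv.swap i j))) = v D := v_image_swap hij hDN
    have h2 : v (insert j (D.image (Equiv.swap i j))) = v (insert i D) := by
      have he : insert j (D.image (Equiv.swap i j)) = (insert i D).image (Equiv.swap i j) := by
        rw [Finset.image_insert, Equiv.swap_apply_left]
      rw [he]
      exact v_image_swap hij (Finset.insert_subset (hij.1) hDN)
    rw [hcard, hDcard, h1, h2]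

lemma avgShapley_swap (hij : IsSymmetric N v i j) :
    avgShapley N v i = avgShapley N v j := by
  obtain ⟨hiN, hjN, _⟩ := id hij
  unfold avgShapley
  congr 1
  refine Finset.sum_nbij' (fun S => S.image (Equiv.swap i j))
    (fun S => S.image (Equiv.swap i j)) ?_ ?_ ?_ ?_ ?_
  · intro S hS
    rw [Finset.mem_filter, Finset.mem_powerset] at hS ⊢
    refine ⟨swap_maps_to hiN hjN hS.1, ?_⟩
    have : Equiv.swap i j i ∈ S.image (Equiv.swap i j) :=
      Finset.mem_image_of_mem _ hS.2
    rwa [Equiv.swap_apply_left] at this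
  · intro S hS
    rw [Finset.mem_filter, Finset.mem_powerset] at hS ⊢
    refine ⟨swap_maps_to hiN hjN hS.1, ?_⟩
    have : Equiv.swap i j j ∈ S.image (Equiv.swap i j) :=
      Finset.mem_image_of_mem _ hS.2
    rwa [Equiv.swap_apply_right] at this
  · intro S _; exact image_swap_swap S
  · intro S _; exact image_swap_swap S
  · intro S hS
    rw [Finset.mem_filter, Finset.mem_powerset] at hS
    exact (shapley_image_swap hij hS.1 hS.2).symm

end Aux

/-- the synergy value satisfies Symmetric-Synergy (P5). -/
theorem synergyValue_symmetric_synergy (N : Finset ℕ) (v : Finset ℕ → ℝ)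
    (hv : v ∅ = 0) (i j : ℕ) (hij : IsSymmetric N v i j)
    (C : Finset ℕ) (hC : C ⊆ N \ {i, j}) :
    synergyValue N v (insert i C) = synergyValue N v (insert j C) := by
  have hiC : i ∉ C := fun h => by
    have := hC h
    simp at this
  have hjC : j ∉ C := fun h => by
    have := hC h
    simp at this
  unfold synergyValue
  rw [hij.2.2 C hC, Finset.sum_insert hiC, Finset.sum_insert hjC,
    avgShapley_swap hij]
end

section
/- The synergy value χ satisfies Null-Synergy: for every game (N,v), every null player i in (N,v), and every coalition C ⊆ N, we have χ^N_v(C∪{i}) = χ^N_v(C). -/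
open Finset

/-- the synergy value satisfies Null-Synergy (P6). -/
theorem synergyValue_null_synergy (N : Finset ℕ) (v : Finset ℕ → ℝ)
    (hv : v ∅ = 0) (i : ℕ) (hi : IsNullPlayer N v i)
    (C : Finset ℕ) (hC : C ⊆ N) :
    synergyValue N v (insert i C) = synergyValue N v C := by
  obtain ⟨hiN, hnull⟩ := hi
  have havg : avgShapley N v i = 0 := by
    unfold avgShapley
    rw [Finset.sum_eq_zero, mul_zero]
    intro S hS
    simp only [Finset.mem_filter, Finset.mem_powerset] at hS
    unfold shapley
    apply Finset.sum_eq_zero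
    intro D hD
    rw [Finset.mem_powerset] at hD
    have : D ⊆ N := hD.trans ((Finset.erase_subset _ _).trans hS.1)
    rw [hnull D this, sub_self, mul_zero]
  by_cases hiC : i ∈ C
  · rw [Finset.insert_eq_self.mpr hiC]
  · unfold synergyValue
    rw [Finset.sum_insert hiC, hnull C hC, havg, zero_add]
end

section
/- Let ψ be a measure of synergy satisfying Symmetric-Synergy (P5), Null-Synergy (P6), Dummy-Synergy (P7), and Normalized-Synergy (P8). Then for every game with player set N of size n, every nonempty coalition S ⊆ N, and every constant α ∈ ℝ, in the game (N, v_{S,α}) defined by v_{S,α}(C) = α if S ⊆ C and v_{S,α}(C) = 0 otherwise, the synergy of any coalition C ⊆ N is: ψ^N_{v_{S,α}}(C) = (1 − 2^{1−|S|}) α if S ⊆ C, and ψ^N_{v_{S,α}}(C) = −|C∩S| · 2^{1−|S|} · α/|S| otherwise. -/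
open Finset

lemma sum_powerset_card_real (S : Finset ℕ) :
    2 * ∑ A ∈ S.powerset, (A.card : ℝ) = S.card * 2 ^ S.card := by
  induction S using Finset.induction_on with
  | empty => simp
  | @insert a S ha ih =>
    have hdisj : Disjoint S.powerset (S.powerset.image (insert a)) := by
      rw [Finset.disjoint_left]
      intro A hA hA'
      simp only [mem_image, mem_powerset] at hA hA'
      obtain ⟨B, hB, hBA⟩ := hA'
      exact ha (hA (hBA ▸ mem_insert_self a B))
    have hinj : ∀ A ∈ S.powerset, ∀ B ∈ S.powerset, insert a A = insert a B → A = B := by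
      intro A hA B hB hAB
      rw [mem_powerset] at hA hB
      have h1 : (insert a A).erase a = (insert a B).erase a := by rw [hAB]
      rwa [erase_insert (fun h => ha (hA h)), erase_insert (fun h => ha (hB h))] at h1
    rw [Finset.powerset_insert, Finset.sum_union hdisj, Finset.sum_image hinj]
    have hcard : ∀ A ∈ S.powerset, ((insert a A).card : ℝ) = A.card + 1 := by
      intro A hA
      rw [card_insert_of_notMem (fun h => ha (mem_powerset.mp hA h))]
      push_cast; ring
    rw [Finset.sum_congr rfl hcard, Finset.sum_add_distrib, Finset.sum_const,
      card_powerset, card_insert_of_notMem ha]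
    push_cast
    ring_nf
    ring_nf at ih
    nlinarith [ih]


/-- for a measure of synergy `ψ` satisfying P5–P8, the synergy of
any coalition `C ⊆ N` in the game `(N, v_{S,α})` (whose value is `α` on
supersets of `S` and `0` otherwise) is `(1 − 2^{1−|S|})·α` if `S ⊆ C`, and
`−|C∩S| · 2^{1−|S|} · α/|S|` otherwise. -/
theorem synergy_of_scaled_carrier_game
    (ψ : Finset ℕ → (Finset ℕ → ℝ) → Finset ℕ → ℝ)
    (hmeas : IsSynergyMeasure ψ) (h5 : SymmetricSynergy ψ) (h6 : NullSynergy ψ)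
    (h7 : DummySynergy ψ) (h8 : NormalizedSynergy ψ)
    (N S : Finset ℕ) (hS : S ⊆ N) (hSne : S.Nonempty) (α : ℝ)
    (C : Finset ℕ) (hC : C ⊆ N) :
    ψ N (fun T => if S ⊆ T then α else 0) C =
      if S ⊆ C then (1 - 2 / 2 ^ S.card : ℝ) * α
      else -((C ∩ S).card : ℝ) * (2 / 2 ^ S.card : ℝ) * (α / S.card) := by
  set v : Finset ℕ → ℝ := fun T => if S ⊆ T then α else 0 with hv
  have hv0 : v ∅ = 0 := by
    simp only [hv, if_neg (fun h => hSne.ne_empty (subset_empty.mp h))]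
  obtain ⟨i₀, hi₀⟩ := hSne
  have hSne' : S.Nonempty := ⟨i₀, hi₀⟩
  -- v evaluations
  have hvpos : ∀ T, S ⊆ T → v T = α := fun T h => if_pos h
  have hvneg : ∀ T, ¬ S ⊆ T → v T = 0 := fun T h => if_neg h
  -- reduction: synergy depends only on C ∩ S
  have hred : ∀ C ⊆ N, ψ N v C = ψ N v (C ∩ S) := by
    have key : ∀ n (C : Finset ℕ), C ⊆ N → (C \ S).card = n →
        ψ N v C = ψ N v (C ∩ S) := by
      intro n
      induction n with
      | zero =>
        intro C hCN h0
        have hCS : C ⊆ S := sdiff_eq_empty_iff_subset.mp (card_eq_zero.mp h0)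
        rw [inter_eq_left.mpr hCS]
      | succ n ih =>
        intro C hCN hcard
        have hne : (C \ S).Nonempty := by rw [← card_pos, hcard]; omega
        obtain ⟨i, hi⟩ := hne
        have hiC : i ∈ C := (mem_sdiff.mp hi).1
        have hiS : i ∉ S := (mem_sdiff.mp hi).2
        have hnull : IsNullPlayer N v i := by
          refine ⟨hCN hiC, fun D _ => ?_⟩
          simp only [hv, subset_insert_iff_of_notMem hiS]
        have h1 := h6 N v hv0 i hnull (C.erase i) ((erase_subset _ _).trans hCN)
        rw [insert_erase hiC] at h1
        have h2 : (C.erase i \ S).card = n := by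
          have : C.erase i \ S = (C \ S).erase i := by
            ext x; simp [mem_erase, mem_sdiff]; tauto
          rw [this, card_erase_of_mem hi, hcard]
          omega
        have h3 : C.erase i ∩ S = C ∩ S := by
          ext x
          simp only [mem_inter, mem_erase]
          exact ⟨fun h => ⟨h.1.2, h.2⟩,
            fun h => ⟨⟨fun he => hiS (he ▸ h.2), h.1⟩, h.2⟩⟩
        rw [← h1, ih (C.erase i) ((erase_subset _ _).trans hCN) h2, h3]
    intro C hCN
    exact key _ C hCN rfl
  -- all singletons of S have the same synergy
  have hsym : ∀ i ∈ S, ψ N v {i} = ψ N v {i₀} := by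
    intro i hi
    by_cases hii : i = i₀
    · rw [hii]
    · have hsymm : IsSymmetric N v i i₀ := by
        refine ⟨hS hi, hS hi₀, fun D hD => ?_⟩
        have h1 : ¬ S ⊆ insert i D := by
          intro h
          rcases mem_insert.mp (h hi₀) with h' | h'
          · exact hii h'.symm
          · have := hD h'
            simp [mem_sdiff, mem_insert] at this
        have h2 : ¬ S ⊆ insert i₀ D := by
          intro h
          rcases mem_insert.mp (h hi) with h' | h'
          · exact hii h'
          · have := hD h'
            simp [mem_sdiff, mem_insert] at this
        rw [hvneg _ h1, hvneg _ h2]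
      have := h5 N v hv0 i i₀ hsymm ∅ (empty_subset _)
      simpa using this
  set b : ℝ := ψ N v {i₀} with hb
  -- proper subsets of S
  have hprop : ∀ n (A : Finset ℕ), A ⊆ S → ¬ S ⊆ A → A.card = n →
      ψ N v A = n * b := by
    intro n
    induction n with
    | zero =>
      intro A _ _ h0
      rw [card_eq_zero.mp h0, hmeas N v hv0]
      simp
    | succ n ih =>
      intro A hAS hSA hcard
      have hAne : A.Nonempty := by rw [← card_pos, hcard]; omega
      obtain ⟨i, hi⟩ := hAne
      have hiS : i ∈ S := hAS hi
      have hsub : A.erase i ⊆ N \ {i} := by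
        intro x hx
        rw [mem_sdiff, mem_singleton]
        exact ⟨hS (hAS (erase_subset _ _ hx)), (mem_erase.mp hx).1⟩
      have hdum := (h7 N v hv0 i (hS hiS)).2 (A.erase i) hsub
      simp only [insert_erase hi] at hdum
      have hvA : v A = 0 := hvneg _ hSA
      have hvAe : v (A.erase i) = 0 :=
        hvneg _ (fun h => hSA (h.trans (erase_subset _ _)))
      have hvi : v {i} = 0 := by
        apply hvneg
        intro h
        have hSi : S = {i} := by
          rcases subset_singleton_iff.mp h with h' | h'
          · exact absurd (h' ▸ hiS) (notMem_empty i)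
          · exact h'
        apply hSA
        rw [hSi]
        exact singleton_subset_iff.mpr hi
      have hψi : ψ N v {i} = b := hsym i hiS
      have hψe : ψ N v (A.erase i) = n * b := by
        refine ih (A.erase i) ((erase_subset _ _).trans hAS)
          (fun h => hSA (h.trans (erase_subset _ _))) ?_
        rw [card_erase_of_mem hi, hcard]
        omega
      rw [hvA, hvAe, hvi, hψi, hψe] at hdum
      push_cast
      linarith
  -- sum over powerset of S is zero
  have hsum0 : ∑ A ∈ S.powerset, ψ N v A = 0 := by
    have h0 := h8 N v hv0
    have h1 : ∑ C ∈ N.powerset, ψ N v C =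
        ∑ p ∈ S.powerset ×ˢ (N \ S).powerset, ψ N v p.1 := by
      refine Finset.sum_nbij' (fun C => (C ∩ S, C \ S)) (fun p => p.1 ∪ p.2)
        ?_ ?_ ?_ ?_ ?_
      · intro D hD
        rw [mem_powerset] at hD
        rw [mem_product, mem_powerset, mem_powerset]
        exact ⟨inter_subset_right, sdiff_subset_sdiff hD (Subset.refl _)⟩
      · intro p hp
        rw [mem_product, mem_powerset, mem_powerset] at hp
        rw [mem_powerset]
        exact union_subset (hp.1.trans hS) (hp.2.trans sdiff_subset)
      · intro D _
        simp only
        ext x; simp [mem_union, mem_inter, mem_sdiff]; tauto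
      · intro p hp
        rw [mem_product, mem_powerset, mem_powerset] at hp
        have hA : (p.1 ∪ p.2) ∩ S = p.1 := by
          ext x
          simp only [mem_inter, mem_union]
          constructor
          · rintro ⟨hx1 | hx2, hxS⟩
            · exact hx1
            · exact absurd hxS (mem_sdiff.mp (hp.2 hx2)).2
          · intro hx; exact ⟨Or.inl hx, hp.1 hx⟩
        have hB : (p.1 ∪ p.2) \ S = p.2 := by
          ext x
          simp only [mem_sdiff, mem_union]
          constructor
          · rintro ⟨hx1 | hx2, hxS⟩
            · exact absurd (hp.1 hx1) hxS
            · exact hx2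
          · intro hx; exact ⟨Or.inr hx, (mem_sdiff.mp (hp.2 hx)).2⟩
        ext <;> simp [hA, hB]
      · intro D hD
        simp only
        have h2 : (D ∩ S) ∩ S = D ∩ S := by
          rw [inter_assoc, inter_self]
        rw [hred D (mem_powerset.mp hD),
          hred (D ∩ S) (inter_subset_left.trans (mem_powerset.mp hD)), h2]
    rw [h1, Finset.sum_product] at h0
    simp only [Finset.sum_const, nsmul_eq_mul] at h0
    rw [← Finset.mul_sum] at h0
    rcases mul_eq_zero.mp h0 with h | h
    · exfalso
      have h' : ((N \ S).powerset.card : ℝ) ≠ 0 := by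
        rw [card_powerset]
        positivity
      exact h' h
    · exact h
  -- case split on |S|
  by_cases hs1 : S.card = 1
  · -- |S| = 1
    have hSi : S = {i₀} := by
      rcases card_eq_one.mp hs1 with ⟨a, ha⟩
      have hia : i₀ = a := by rw [ha] at hi₀; exact mem_singleton.mp hi₀
      rw [ha, hia]
    have hpow : S.powerset = {∅, S} := by
      rw [hSi]
      ext A
      simp [subset_singleton_iff]
    rw [hpow, Finset.sum_pair (by rw [hSi]; exact (Finset.singleton_ne_empty i₀).symm),
      hmeas N v hv0, zero_add] at hsum0
    rw [hred C hC]
    by_cases hSC : S ⊆ C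
    · rw [if_pos hSC, inter_eq_right.mpr hSC, hsum0, hs1]
      norm_num
    · have hi₀C : i₀ ∉ C := fun h => hSC (hSi ▸ singleton_subset_iff.mpr h)
      have hCS : C ∩ S = ∅ := by
        rw [hSi]
        exact inter_singleton_of_notMem hi₀C
      rw [if_neg hSC, hCS, hmeas N v hv0]
      simp
  · -- |S| ≥ 2
    have hs2 : 2 ≤ S.card := by
      have := card_pos.mpr hSne'
      omega
    -- dummy equation at S
    have hpsiS : ψ N v S = α + S.card * b := by
      have hsub : S.erase i₀ ⊆ N \ {i₀} := by
        intro x hx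
        rw [mem_sdiff, mem_singleton]
        exact ⟨hS (erase_subset _ _ hx), (mem_erase.mp hx).1⟩
      have hdum := (h7 N v hv0 i₀ (hS hi₀)).2 (S.erase i₀) hsub
      simp only [insert_erase hi₀] at hdum
      have hvS : v S = α := hvpos _ (Finset.Subset.refl S)
      have hve : v (S.erase i₀) = 0 :=
        hvneg _ (fun h => (notMem_erase i₀ S) (h hi₀))
      have hvi : v {i₀} = 0 := by
        apply hvneg
        intro h
        have := card_le_card h
        simp at this
        omega
      have hψe : ψ N v (S.erase i₀) = ((S.card - 1 : ℕ) : ℝ) * b := by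
        refine hprop _ _ (erase_subset _ _)
          (fun h => (notMem_erase i₀ S) (h hi₀)) ?_
        rw [card_erase_of_mem hi₀]
      have hcast : ((S.card - 1 : ℕ) : ℝ) = (S.card : ℝ) - 1 := by
        rw [Nat.cast_sub (by omega)]
        norm_num
      rw [hvS, hve, hvi, hψe, hcast, hsym i₀ hi₀] at hdum
      linarith
    -- evaluate the powerset sum
    set T : ℝ := ∑ A ∈ S.powerset, (A.card : ℝ) with hT
    have hTsum := sum_powerset_card_real S
    have hE : T * b + α = 0 := by
      rw [← Finset.sum_erase_add S.powerset _ (mem_powerset_self S)] at hsum0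
      have hcongr : ∀ A ∈ S.powerset.erase S, ψ N v A = (A.card : ℝ) * b := by
        intro A hA
        have hAS : A ⊆ S := mem_powerset.mp (mem_of_mem_erase hA)
        have hne : A ≠ S := (mem_erase.mp hA).1
        exact hprop A.card A hAS
          (fun h => hne (Finset.Subset.antisymm hAS h)) rfl
      rw [Finset.sum_congr rfl hcongr] at hsum0
      have h4 : ∑ A ∈ S.powerset.erase S, (A.card : ℝ) * b + (S.card : ℝ) * b
          = ∑ A ∈ S.powerset, (A.card : ℝ) * b :=
        Finset.sum_erase_add _ _ (mem_powerset_self S)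
      rw [← Finset.sum_mul, ← Finset.sum_mul] at h4
      rw [← Finset.sum_mul, hpsiS] at hsum0
      linarith
    have hkey : (S.card : ℝ) * 2 ^ S.card * b = -(2 * α) := by
      linear_combination 2 * hE - b * hTsum
    have h2s : ((2 : ℝ) ^ S.card) ≠ 0 := by positivity
    have hsc : ((S.card : ℝ)) ≠ 0 := by
      have := card_pos.mpr hSne'
      positivity
    rw [hred C hC]
    by_cases hSC : S ⊆ C
    · rw [if_pos hSC, inter_eq_right.mpr hSC, hpsiS]
      field_simp
      linear_combination hkey
    · have hsub : C ∩ S ⊆ S := inter_subset_right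
      have hne : ¬ S ⊆ C ∩ S := fun h => hSC (h.trans inter_subset_left)
      rw [if_neg hSC, hprop (C ∩ S).card (C ∩ S) hsub hne rfl]
      field_simp
      linear_combination ((C ∩ S).card : ℝ) * hkey
end

section
/- If i and j are symmetric players in a game (N,v), then their average Shapley values are equal: φ̄_i(N,v) = φ̄_j(N,v). -/
open Finset

/-- symmetric players have equal average Shapley values. -/
theorem avgShapley_eq_of_symmetric (N : Finset ℕ) (v : Finset ℕ → ℝ)
    (hv : v ∅ = 0) (i j : ℕ) (hij : IsSymmetric N v i j) :
    avgShapley N v i = avgShapley N v j := by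
  obtain ⟨hiN, hjN, hsym⟩ := hij
  set σ := Equiv.swap i j with hσdef
  have hσi : σ i = j := Equiv.swap_apply_left i j
  have hσj : σ j = i := Equiv.swap_apply_right i j
  have hσ_fix : ∀ x, x ≠ i → x ≠ j → σ x = x := fun x h1 h2 =>
    Equiv.swap_apply_of_ne_of_ne h1 h2
  -- double map is identity
  have hmapmap : ∀ s : Finset ℕ, (s.map σ.toEmbedding).map σ.toEmbedding = s := by
    intro s
    rw [Finset.map_map]
    convert Finset.map_refl
    ext x
    simp only [Function.Embedding.trans_apply, Equiv.toEmbedding_apply,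
      Function.Embedding.refl_apply, hσdef, Equiv.swap_apply_self]
  -- mapped sets stay inside N
  have hmapN : ∀ D : Finset ℕ, D ⊆ N → D.map σ.toEmbedding ⊆ N := by
    intro D hD x hx
    simp only [Finset.mem_map, Equiv.coe_toEmbedding] at hx
    obtain ⟨y, hy, rfl⟩ := hx
    by_cases h1 : y = i
    · subst h1; rw [hσi]; exact hjN
    by_cases h2 : y = j
    · subst h2; rw [hσj]; exact hiN
    · rw [hσ_fix y h1 h2]; exact hD hy
  -- map is identity on sets avoiding i and j
  have hmap_id : ∀ D : Finset ℕ, i ∉ D → j ∉ D → D.map σ.toEmbedding = D := by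
    intro D hi hj
    ext x
    simp only [Finset.mem_map, Equiv.coe_toEmbedding]
    constructor
    · rintro ⟨y, hy, rfl⟩
      rw [hσ_fix y (fun h => hi (h ▸ hy)) (fun h => hj (h ▸ hy))]
      exact hy
    · intro hx
      exact ⟨x, hx, hσ_fix x (fun h => hi (h ▸ hx)) (fun h => hj (h ▸ hx))⟩
  -- structure of mapped sets containing j
  have hmap_ins : ∀ D : Finset ℕ, i ∉ D → j ∈ D →
      D.map σ.toEmbedding = insert i (D.erase j) := by
    intro D hiD hjD
    have hiE : i ∉ D.erase j := fun h => hiD (Finset.mem_of_mem_erase h)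
    have hjE : j ∉ D.erase j := Finset.notMem_erase j D
    conv_lhs => rw [← Finset.insert_erase hjD]
    rw [Finset.map_insert, hmap_id _ hiE hjE, Equiv.toEmbedding_apply, hσj]
  -- erase of a set containing j, inside N, avoiding i, is ⊆ N \ {i,j}
  have hsub : ∀ D : Finset ℕ, D ⊆ N → i ∉ D → j ∉ D → D ⊆ N \ {i, j} := by
    intro D hD hiD hjD x hx
    refine Finset.mem_sdiff.mpr ⟨hD hx, ?_⟩
    simp only [Finset.mem_insert, Finset.mem_singleton]
    push_neg
    exact ⟨fun h => hiD (h ▸ hx), fun h => hjD (h ▸ hx)⟩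
  -- value is preserved by the swap, for sets not containing i
  have hval : ∀ D : Finset ℕ, D ⊆ N → i ∉ D → v (D.map σ.toEmbedding) = v D := by
    intro D hD hiD
    by_cases hjD : j ∈ D
    · have hE : D.erase j ⊆ N \ {i, j} :=
        hsub _ (fun x hx => hD (Finset.mem_of_mem_erase hx))
          (fun h => hiD (Finset.mem_of_mem_erase h)) (Finset.notMem_erase j D)
      rw [hmap_ins D hiD hjD, hsym _ hE, Finset.insert_erase hjD]
    · rw [hmap_id D hiD hjD]
  -- inserting i before / j after the swap
  have hins : ∀ D : Finset ℕ, D ⊆ N → i ∉ D →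
      v (insert j (D.map σ.toEmbedding)) = v (insert i D) := by
    intro D hD hiD
    by_cases hjD : j ∈ D
    · rw [hmap_ins D hiD hjD, Finset.insert_comm, Finset.insert_erase hjD]
    · rw [hmap_id D hiD hjD, ← hsym D (hsub D hD hiD hjD)]
  -- shapley value equality on subgames
  have hshap : ∀ C : Finset ℕ, C ⊆ N → i ∈ C →
      shapley C v i = shapley (C.map σ.toEmbedding) v j := by
    intro C hC hiC
    unfold shapley
    rw [Finset.card_map]
    have herase : (C.map σ.toEmbedding).erase j = (C.erase i).map σ.toEmbedding := by
      rw [Finset.map_erase, Equiv.toEmbedding_apply, hσi]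
    rw [herase]
    refine Finset.sum_nbij' (fun D => D.map σ.toEmbedding) (fun D => D.map σ.toEmbedding)
      ?_ ?_ ?_ ?_ ?_
    · intro D hD
      simp only [Finset.mem_powerset] at hD ⊢
      exact Finset.map_subset_map.mpr hD
    · intro D hD
      simp only [Finset.mem_powerset] at hD ⊢
      have h2 : D.map σ.toEmbedding ⊆ ((C.erase i).map σ.toEmbedding).map σ.toEmbedding :=
        Finset.map_subset_map.mpr hD
      rwa [hmapmap] at h2
    · intro D _; exact hmapmap D
    · intro D _; exact hmapmap D
    · intro D hD
      simp only [Finset.mem_powerset] at hD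
      have hDN : D ⊆ N := hD.trans ((Finset.erase_subset i C).trans hC)
      have hiD : i ∉ D := fun h => Finset.notMem_erase i C (hD h)
      rw [Finset.card_map, hval D hDN hiD, hins D hDN hiD]
  -- main bijection on the outer sum
  unfold avgShapley
  congr 1
  refine Finset.sum_nbij' (fun C => C.map σ.toEmbedding) (fun C => C.map σ.toEmbedding)
    ?_ ?_ ?_ ?_ ?_
  · intro C hC
    simp only [Finset.mem_filter, Finset.mem_powerset] at hC ⊢
    refine ⟨hmapN C hC.1, ?_⟩
    rw [← hσi]
    exact Finset.mem_map_of_mem _ hC.2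
  · intro C hC
    simp only [Finset.mem_filter, Finset.mem_powerset] at hC ⊢
    refine ⟨hmapN C hC.1, ?_⟩
    rw [← hσj]
    exact Finset.mem_map_of_mem _ hC.2
  · intro C _; exact hmapmap C
  · intro C _; exact hmapmap C
  · intro C hC
    simp only [Finset.mem_filter, Finset.mem_powerset] at hC
    exact hshap C hC.1 hC.2
end

section
/- The synergy value χ satisfies Marginal-Synergy: for every pair of games (N,v) and (N,w) on the same player set N and every coalition C ⊆ N, if MC^S_i(N,v) = MC^S_i(N,w) for every i ∈ C and every S ⊆ N\{i}, then χ^N_v(C) = χ^N_w(C). -/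
open Finset

/-- the synergy value satisfies Marginal-Synergy (P10). -/
theorem synergyValue_marginal_synergy (N : Finset ℕ) (v w : Finset ℕ → ℝ)
    (hv : v ∅ = 0) (hw : w ∅ = 0) (C : Finset ℕ) (hC : C ⊆ N)
    (h : ∀ i ∈ C, ∀ S ⊆ N \ {i}, MC v S i = MC w S i) :
    synergyValue N v C = synergyValue N w C := by
  have key : ∀ S : Finset ℕ, S ⊆ C → v S = w S := by
    intro S
    induction S using Finset.strongInduction with
    | _ S ih =>
      intro hS
      rcases S.eq_empty_or_nonempty with rfl | ⟨i, hi⟩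
      · simp [hv, hw]
      · have hsub : S.erase i ⊆ N \ {i} := by
          intro x hx
          simp only [mem_erase] at hx
          simp only [mem_sdiff, mem_singleton]
          exact ⟨hC (hS hx.2), hx.1⟩
        have h1 := h i (hS hi) (S.erase i) hsub
        have h2 := ih (S.erase i) (erase_ssubset hi)
          ((erase_subset _ _).trans hS)
        unfold MC at h1
        rw [insert_erase hi] at h1
        linarith
  unfold synergyValue
  rw [key C (le_refl C)]
  congr 1
  refine Finset.sum_congr rfl fun i hiC => ?_
  unfold avgShapley
  congr 1
  refine Finset.sum_congr rfl fun C' hC' => ?_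
  simp only [mem_filter, mem_powerset] at hC'
  unfold shapley
  refine Finset.sum_congr rfl fun A hA => ?_
  simp only [mem_powerset] at hA
  have hAsub : A ⊆ N \ {i} := by
    intro x hx
    have := hA hx
    simp only [mem_erase] at this
    simp only [mem_sdiff, mem_singleton]
    exact ⟨hC'.1 this.2, this.1⟩
  have := h i hiC A hAsub
  unfold MC at this
  rw [this]
end

section
/- For every game (N,v) and every player i ∈ N^+_v (i.e., every player that is not a null player in (N,v)), the set of non-null players of the game (N,v_i), where v_i(C) = v(C\{i}) for all C ⊆ N, is a strict subset of the set of non-null players of (N,v): N^+_{v_i} ⊊ N^+_v. -/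
open Finset

open Classical in
/-- `N^+_v`: the set of players of `(N,v)` that are not null players. -/
noncomputable def nonNullPlayers (N : Finset ℕ) (v : Finset ℕ → ℝ) : Finset ℕ :=
  N.filter fun i => ∃ C ⊆ N, MC v C i ≠ 0

/-- for every `i ∈ N^+_v`, the set of non-null players of
`(N, v_i)`, where `v_i(C) = v(C \ {i})`, is a strict subset of `N^+_v`. -/
theorem nonNullPlayers_erased_ssubset (N : Finset ℕ) (v : Finset ℕ → ℝ)
    (hv : v ∅ = 0) (i : ℕ) (hi : i ∈ nonNullPlayers N v) :
    nonNullPlayers N (fun C => v (C \ {i})) ⊂ nonNullPlayers N v := by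
  classical
  constructor
  · intro j hj
    simp only [nonNullPlayers, mem_filter] at hj ⊢
    obtain ⟨hjN, C, hCN, hMC⟩ := hj
    refine ⟨hjN, ?_⟩
    by_cases hji : j = i
    · exfalso
      apply hMC
      simp [MC, hji, Finset.insert_sdiff_of_mem]
    · refine ⟨C \ {i}, (sdiff_subset).trans hCN, ?_⟩
      simpa [MC, Finset.insert_sdiff_of_notMem, Finset.mem_singleton, hji] using hMC
  · intro hsub
    have := hsub hi
    simp only [nonNullPlayers, mem_filter] at this
    obtain ⟨-, C, -, hMC⟩ := this
    apply hMC
    simp [MC, Finset.insert_sdiff_of_mem]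
end

section
/- Let (N,w) be a game, let 𝒞(N,w) = {C ⊆ N : ∃ C' ⊆ C, w(C') ≠ 0}, and let Ĉ be the intersection of all coalitions in 𝒞(N,w). If |Ĉ| > 1, then every coalition C ⊆ N with Ĉ ⊄ C satisfies w(C) = 0, and consequently any two players i, j ∈ Ĉ are symmetric in the game (N,w). -/
open Finset

open Classical in
/-- `𝒞(N,w)`: the coalitions of `(N,w)` having at least one subset of
non-zero value. -/
noncomputable def supportedCoalitions (N : Finset ℕ) (w : Finset ℕ → ℝ) :
    Finset (Finset ℕ) :=
  N.powerset.filter fun C => ∃ C' ⊆ C, w C' ≠ 0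

open Classical in
/-- `Ĉ`: the intersection of all coalitions in `𝒞(N,w)`. -/
noncomputable def coreIntersection (N : Finset ℕ) (w : Finset ℕ → ℝ) : Finset ℕ :=
  N.filter fun x => ∀ C ∈ supportedCoalitions N w, x ∈ C

/-- if `|Ĉ| > 1`, then every coalition `C ⊆ N` not containing `Ĉ`
has `w(C) = 0`, and consequently any two players of `Ĉ` are symmetric in
`(N,w)`. -/
theorem coreIntersection_symmetric (N : Finset ℕ) (w : Finset ℕ → ℝ)
    (hw : w ∅ = 0) (h : 1 < (coreIntersection N w).card) :
    (∀ C ⊆ N, ¬ coreIntersection N w ⊆ C → w C = 0) ∧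
    ∀ i ∈ coreIntersection N w, ∀ j ∈ coreIntersection N w,
      IsSymmetric N w i j := by

  have key : ∀ C ⊆ N, ¬ coreIntersection N w ⊆ C → w C = 0 := by
    intro C hCN hns
    by_contra hC
    apply hns
    intro x hx
    simp only [coreIntersection, mem_filter] at hx
    apply hx.2 C
    simp only [supportedCoalitions, mem_filter, mem_powerset]
    exact ⟨hCN, C, le_refl C, hC⟩
  refine ⟨key, ?_⟩
  intro i hi j hj
  have hiN : i ∈ N := (mem_filter.mp hi).1
  have hjN : j ∈ N := (mem_filter.mp hj).1
  refine ⟨hiN, hjN, ?_⟩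
  intro C hC
  by_cases hij : i = j
  · rw [hij]
  · have hCi : insert i C ⊆ N := by
      intro x hx
      rcases mem_insert.mp hx with rfl | hx
      · exact hiN
      · exact (sdiff_subset (Finset.mem_of_subset hC hx))
    have hCj : insert j C ⊆ N := by
      intro x hx
      rcases mem_insert.mp hx with rfl | hx
      · exact hjN
      · exact (sdiff_subset (Finset.mem_of_subset hC hx))
    have h1 : w (insert i C) = 0 := by
      apply key _ hCi
      intro hsub
      have := hsub hj
      rcases mem_insert.mp this with rfl | hx
      · exact hij rfl
      · have := (mem_sdiff.mp (hC hx)).2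
        simp at this
    have h2 : w (insert j C) = 0 := by
      apply key _ hCj
      intro hsub
      have := hsub hi
      rcases mem_insert.mp this with rfl | hx
      · exact hij rfl
      · have := (mem_sdiff.mp (hC hx)).2
        simp at this
    rw [h1, h2]
end
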